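/- arXiv:2007.02910 — 4 statements merged into one kernel-verified Lean document; each statement's English description precedes it below -/
import Mathlib

section
/- Let A have full rank with rows a_i of unit ℓ^2 norm, let x solve Ax = b, and let x_k be the current iterate with error e_k = x_k − x ≠ 0. If the next iterate is x_{k+1} = x_k + (b_i − ⟨a_i, x_k⟩) a_i where the index i ∈ {1,…,m} is chosen at random with probability |⟨a_i, x_k⟩ − b_i|^p / ‖Ax_k − b‖_{ℓ^p}^p, then E‖x_{k+1} − x‖_2^2 = (1 − ‖A e_k‖_{ℓ^{p+2}}^{p+2} / (‖A e_k‖_{ℓ^p}^p · ‖e_k‖_2^2)) · ‖e_k‖_2^2. -/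
/-!
Each step is the orthogonal projection of `x_k` onto the hyperplane `⟨a_i, ·⟩ = b_i`, which
contains `x`; as `‖a_i‖ = 1`, Pythagoras gives `‖e_{k+1}‖² = ‖e_k‖² - (A e_k)_i²`. Averaging
with the weights `|(A e_k)_i|^p / ∑ |(A e_k)_i'|^p` subtracts `∑ |(A e_k)_i|^(p+2) / ∑ |(A e_k)_i|^p`;
full rank makes `A e_k ≠ 0`, so the weights are well defined.
-/

noncomputable def lpNorm {m : ℕ} (q : ℝ) (y : Fin m → ℝ) : ℝ :=
  (∑ i, |y i| ^ q) ^ (1 / q)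

open Matrix

theorem Matrix.mulVec_injective_of_rank_eq_card {K m n : Type*} [Field K] [Fintype n]
    (A : Matrix m n K) (hA : A.rank = Fintype.card n) : Function.Injective A.mulVec := by
  have hker : LinearMap.ker A.mulVecLin = ⊥ := by
    have := LinearMap.finrank_range_add_finrank_ker A.mulVecLin
    rw [Module.finrank_fintype_fun_eq_card, ← Matrix.rank, hA] at this
    exact Submodule.finrank_eq_zero.mp (by omega)
  exact LinearMap.ker_eq_bot.mp hker

theorem lpNorm_rpow_eq_sum {m : ℕ} {q : ℝ} (hq : q ≠ 0) (y : Fin m → ℝ) :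
    lpNorm q y ^ q = ∑ i, |y i| ^ q := by
  rw [lpNorm, ← Real.rpow_mul (Finset.sum_nonneg fun i _ => by positivity),
    one_div_mul_cancel hq, Real.rpow_one]

theorem Real.abs_rpow_mul_sq {p : ℝ} (hp : p + 2 ≠ 0) (r : ℝ) :
    |r| ^ p * r ^ 2 = |r| ^ (p + 2) := by
  rw [Real.rpow_add' (abs_nonneg r) hp, ← sq_abs r]
  norm_cast

theorem sum_abs_rpow_ne_zero {ι : Type*} [Fintype ι] {y : ι → ℝ} (hy : y ≠ 0)
    (p : ℝ) : ∑ i, |y i| ^ p ≠ 0 := by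
  obtain ⟨i, hi⟩ := Function.ne_iff.mp hy
  refine (Finset.sum_pos' (fun i _ => by positivity) ⟨i, Finset.mem_univ i, ?_⟩).ne'
  exact Real.rpow_pos_of_pos (abs_pos.mpr hi) p

theorem sum_sq_ne_zero {ι : Type*} [Fintype ι] {y : ι → ℝ} (hy : y ≠ 0) :
    ∑ i, y i ^ 2 ≠ 0 := by
  simpa [sq, ← dotProduct_self_eq_zero.not, dotProduct] using hy

theorem sum_sq_sub_dotProduct_mul {ι : Type*} [Fintype ι] {a : ι → ℝ}
    (ha : ∑ j, a j ^ 2 = 1) (e : ι → ℝ) :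
    ∑ j, (e j - (a ⬝ᵥ e) * a j) ^ 2 = ∑ j, e j ^ 2 - (a ⬝ᵥ e) ^ 2 := by
  have expand : ∀ j, (e j - (a ⬝ᵥ e) * a j) ^ 2
      = e j ^ 2 - 2 * (a ⬝ᵥ e) * (a j * e j) + (a ⬝ᵥ e) ^ 2 * a j ^ 2 := fun j => by ring
  have hdot : ∑ j, a j * e j = a ⬝ᵥ e := rfl
  simp only [expand, Finset.sum_add_distrib, Finset.sum_sub_distrib, ← Finset.mul_sum, ha, hdot]
  ring

theorem sum_div_sum_mul_sub {ι : Type*} [Fintype ι] {w : ι → ℝ} (hw : ∑ i, w i ≠ 0)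
    (c : ℝ) (f : ι → ℝ) :
    ∑ i, w i / (∑ i', w i') * (c - f i) = c - (∑ i, w i * f i) / ∑ i, w i := by
  simp only [div_mul_eq_mul_div, ← Finset.sum_div, mul_sub, Finset.sum_sub_distrib,
    ← Finset.sum_mul]
  field_simp

theorem weighted_kaczmarz_one_step_general {m n : ℕ} (A : Matrix (Fin m) (Fin n) ℝ)
    (hrank : A.rank = n)
    (hrows : ∀ i, ∑ j, (A i j) ^ 2 = 1)
    (b : Fin m → ℝ) (x : Fin n → ℝ) (hx : A.mulVec x = b)
    (xk : Fin n → ℝ) (he : xk - x ≠ 0)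
    (p : ℝ) (hp : 0 < p) :
    (∑ i, (|A.mulVec xk i - b i| ^ p / ∑ i', |A.mulVec xk i' - b i'| ^ p) *
        ∑ j, ((xk + (b i - A.mulVec xk i) • A i) j - x j) ^ 2) =
      (1 - lpNorm (p + 2) (A.mulVec (xk - x)) ^ (p + 2) /
            (lpNorm p (A.mulVec (xk - x)) ^ p * ∑ j, (xk j - x j) ^ 2)) *
        ∑ j, (xk j - x j) ^ 2 := by
  have hres : ∀ i, (A *ᵥ xk) i - b i = (A *ᵥ (xk - x)) i := fun i => by
    rw [← hx, mulVec_sub, Pi.sub_apply]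
  have hstep : ∀ i, ∑ j, ((xk + (b i - (A *ᵥ xk) i) • A i) j - x j) ^ 2
      = ∑ j, (xk j - x j) ^ 2 - ((A *ᵥ xk) i - b i) ^ 2 := fun i => by
    have h := sum_sq_sub_dotProduct_mul (hrows i) (xk - x)
    rw [show A i ⬝ᵥ (xk - x) = (A *ᵥ xk) i - b i from (hres i).symm] at h
    simp only [Pi.sub_apply] at h
    rw [← h]
    congr! 2 with j
    simp only [Pi.add_apply, Pi.smul_apply, smul_eq_mul]
    ring
  have hAe : A *ᵥ (xk - x) ≠ 0 := fun h =>
    he (A.mulVec_injective_of_rank_eq_card (by simpa using hrank) (by simpa using h))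
  have hE : ∑ j, (xk j - x j) ^ 2 ≠ 0 := sum_sq_ne_zero he
  have hp2 : p + 2 ≠ 0 := by linarith
  simp only [hstep]
  simp only [hres, sum_div_sum_mul_sub (sum_abs_rpow_ne_zero hAe p),
    Real.abs_rpow_mul_sq hp2, lpNorm_rpow_eq_sum hp.ne', lpNorm_rpow_eq_sum hp2]
  field_simp

/-- One step of the weighted randomized Kaczmarz method: the expected squared error after
choosing equation `i` with probability `|⟨aᵢ,x_k⟩ - bᵢ|^p / ‖Ax_k - b‖_{ℓ^p}^p` and setting
`x_{k+1} = x_k + (bᵢ - ⟨aᵢ,x_k⟩) aᵢ` equals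
`(1 - ‖Ae_k‖_{ℓ^{p+2}}^{p+2}/(‖Ae_k‖_{ℓ^p}^p ‖e_k‖₂²)) ‖e_k‖₂²`, where `e_k = x_k - x`. -/
theorem weighted_kaczmarz_one_step {m n : ℕ} (A : Matrix (Fin m) (Fin n) ℝ)
    (hmn : n ≤ m) (hrank : A.rank = n)
    (hrows : ∀ i, ∑ j, (A i j) ^ 2 = 1)
    (b : Fin m → ℝ) (x : Fin n → ℝ) (hx : A.mulVec x = b)
    (xk : Fin n → ℝ) (he : xk - x ≠ 0)
    (p : ℝ) (hp : 0 < p) :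
    (∑ i, (|A.mulVec xk i - b i| ^ p / ∑ i', |A.mulVec xk i' - b i'| ^ p) *
        ∑ j, ((xk + (b i - A.mulVec xk i) • A i) j - x j) ^ 2) =
      (1 - lpNorm (p + 2) (A.mulVec (xk - x)) ^ (p + 2) /
            (lpNorm p (A.mulVec (xk - x)) ^ p * ∑ j, (xk j - x j) ^ 2)) *
        ∑ j, (xk j - x j) ^ 2 :=
  weighted_kaczmarz_one_step_general A hrank hrows b x hx xk he p hp
end

section
/- Main theorem (weighted randomized Kaczmarz convergence): Let A ∈ ℝ^{m×n} with m ≥ n, rank n, rows of unit ℓ^2 norm, let x solve Ax = b, and let 0 < p < ∞. Let (x_k) be the weighted randomized Kaczmarz iteration where at each step equation i is chosen with probability |⟨a_i, x_k⟩ − b_i|^p / ‖Ax_k − b‖_{ℓ^p}^p and x_{k+1} = x_k + (b_i − ⟨a_i, x_k⟩) a_i. Then E‖x_k − x‖_2^2 ≤ (1 − c_p)^k ‖x_0 − x‖_2^2, where c_p = inf_{z ≠ 0} ‖Az‖_{ℓ^{p+2}}^{p+2} / (‖Az‖_{ℓ^p}^p ‖z‖_2^2). -/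
/-- One weighted Kaczmarz step using equation `i`. -/
noncomputable def kacStep {m n : ℕ} (A : Matrix (Fin m) (Fin n) ℝ) (b : Fin m → ℝ)
    (y : Fin n → ℝ) (i : Fin m) : Fin n → ℝ :=
  y + (b i - A.mulVec y i) • A i

/-- Selection probability of equation `i` at state `y`. -/
noncomputable def kacWeight {m n : ℕ} (A : Matrix (Fin m) (Fin n) ℝ) (b : Fin m → ℝ)
    (p : ℝ) (y : Fin n → ℝ) (i : Fin m) : ℝ :=
  |A.mulVec y i - b i| ^ p / ∑ i', |A.mulVec y i' - b i'| ^ p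

/-- Expected squared distance `E ‖x_k - x‖₂²` of the weighted randomized Kaczmarz iteration
after `k` steps started at `y`. -/
noncomputable def kacErr {m n : ℕ} (A : Matrix (Fin m) (Fin n) ℝ) (b : Fin m → ℝ)
    (p : ℝ) (x : Fin n → ℝ) : ℕ → (Fin n → ℝ) → ℝ
  | 0, y => ∑ j, (y j - x j) ^ 2
  | k + 1, y => ∑ i, kacWeight A b p y i * kacErr A b p x k (kacStep A b y i)

open Matrix Finset

lemma lpNorm_nonneg {m : ℕ} (q : ℝ) (v : Fin m → ℝ) : 0 ≤ lpNorm q v :=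
  Real.rpow_nonneg (sum_nonneg fun _ _ => Real.rpow_nonneg (abs_nonneg _) _) _

lemma lpNorm_rpow_self {m : ℕ} {q : ℝ} (hq : q ≠ 0) (v : Fin m → ℝ) :
    lpNorm q v ^ q = ∑ i, |v i| ^ q := by
  rw [lpNorm, ← Real.rpow_mul (sum_nonneg fun _ _ => Real.rpow_nonneg (abs_nonneg _) _),
    one_div, inv_mul_cancel₀ hq, Real.rpow_one]

lemma abs_rpow_add_two {p : ℝ} (hp : p + 2 ≠ 0) (t : ℝ) : |t| ^ (p + 2) = |t| ^ p * t ^ 2 := by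
  rw [Real.rpow_add' (abs_nonneg t) hp, Real.rpow_two, sq_abs]

lemma sq_mulVec_apply_le {m n : ℕ} {A : Matrix (Fin m) (Fin n) ℝ} {i : Fin m}
    (hi : ∑ j, A i j ^ 2 ≤ 1) (z : Fin n → ℝ) :
    (A *ᵥ z) i ^ 2 ≤ ∑ j, z j ^ 2 :=
  calc (A *ᵥ z) i ^ 2 = (∑ j, A i j * z j) ^ 2 := rfl
    _ ≤ (∑ j, A i j ^ 2) * ∑ j, z j ^ 2 := sum_mul_sq_le_sq_mul_sq _ _ _
    _ ≤ ∑ j, z j ^ 2 := mul_le_of_le_one_left (sum_nonneg fun _ _ => sq_nonneg _) hi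

lemma sum_abs_mulVec_rpow_add_two_le {m n : ℕ} {A : Matrix (Fin m) (Fin n) ℝ} {p : ℝ}
    (hp : p + 2 ≠ 0) (hrows : ∀ i, ∑ j, A i j ^ 2 ≤ 1) (z : Fin n → ℝ) :
    ∑ i, |(A *ᵥ z) i| ^ (p + 2) ≤ (∑ i, |(A *ᵥ z) i| ^ p) * ∑ j, z j ^ 2 := by
  rw [sum_mul]
  refine sum_le_sum fun i _ => ?_
  rw [abs_rpow_add_two hp]
  exact mul_le_mul_of_nonneg_left (sq_mulVec_apply_le (hrows i) z)
    (Real.rpow_nonneg (abs_nonneg _) _)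

section Rate

variable {m n : ℕ} (A : Matrix (Fin m) (Fin n) ℝ) (p : ℝ)

noncomputable def kacRatio (z : Fin n → ℝ) : ℝ :=
  lpNorm (p + 2) (A *ᵥ z) ^ (p + 2) / (lpNorm p (A *ᵥ z) ^ p * ∑ j, z j ^ 2)

/-- The contraction constant `c_p`. -/
noncomputable def kacRate : ℝ :=
  ⨅ z : {z : Fin n → ℝ // z ≠ 0}, kacRatio A p z.1

lemma kacRatio_nonneg (z : Fin n → ℝ) : 0 ≤ kacRatio A p z := by
  unfold kacRatio
  have := lpNorm_nonneg (p + 2) (A *ᵥ z)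
  have := lpNorm_nonneg p (A *ᵥ z)
  positivity

variable {A p}

lemma kacRatio_eq (hp : p ≠ 0) (hp2 : p + 2 ≠ 0) (z : Fin n → ℝ) :
    kacRatio A p z =
      (∑ i, |(A *ᵥ z) i| ^ (p + 2)) / ((∑ i, |(A *ᵥ z) i| ^ p) * ∑ j, z j ^ 2) := by
  rw [kacRatio, lpNorm_rpow_self hp2, lpNorm_rpow_self hp]

lemma kacRate_le_kacRatio {z : Fin n → ℝ} (hz : z ≠ 0) : kacRate A p ≤ kacRatio A p z := by
  refine ciInf_le (f := fun w : {z : Fin n → ℝ // z ≠ 0} => kacRatio A p w.1) ?_ ⟨z, hz⟩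
  exact ⟨0, by rintro _ ⟨w, rfl⟩; exact kacRatio_nonneg A p w.1⟩

lemma kacRate_le_one (hp : p ≠ 0) (hp2 : p + 2 ≠ 0) (hrows : ∀ i, ∑ j, A i j ^ 2 ≤ 1) :
    kacRate A p ≤ 1 := by
  rcases isEmpty_or_nonempty {z : Fin n → ℝ // z ≠ 0} with _ | ⟨⟨z, hz⟩⟩
  · simp [kacRate, Real.iInf_of_isEmpty]
  · refine (kacRate_le_kacRatio hz).trans ?_
    rw [kacRatio_eq hp hp2]
    exact div_le_one_of_le₀ (sum_abs_mulVec_rpow_add_two_le hp2 hrows z)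
      (mul_nonneg (sum_nonneg fun _ _ => Real.rpow_nonneg (abs_nonneg _) _)
        (sum_nonneg fun _ _ => sq_nonneg _))

lemma kacRate_mul_sum_sq_le (hp : p ≠ 0) (hp2 : p + 2 ≠ 0) (z : Fin n → ℝ) :
    kacRate A p * ∑ j, z j ^ 2 ≤
      (∑ i, |(A *ᵥ z) i| ^ (p + 2)) / ∑ i, |(A *ᵥ z) i| ^ p := by
  rcases eq_or_ne z 0 with rfl | hz
  · simp [Real.zero_rpow hp2]
  have hpos : 0 < ∑ j, z j ^ 2 := by
    obtain ⟨j, hj⟩ := Function.ne_iff.mp hz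
    replace hj : z j ≠ 0 := hj
    exact sum_pos' (fun _ _ => sq_nonneg _) ⟨j, mem_univ j, by positivity⟩
  calc kacRate A p * ∑ j, z j ^ 2 ≤ kacRatio A p z * ∑ j, z j ^ 2 :=
        mul_le_mul_of_nonneg_right (kacRate_le_kacRatio hz) hpos.le
    _ = _ := by rw [kacRatio_eq hp hp2, div_mul_eq_div_div, div_mul_cancel₀ _ hpos.ne']

end Rate

section Iteration

variable {m n : ℕ} {A : Matrix (Fin m) (Fin n) ℝ} {b : Fin m → ℝ} {x : Fin n → ℝ} {p : ℝ}

lemma kacWeight_nonneg (y : Fin n → ℝ) (i : Fin m) : 0 ≤ kacWeight A b p y i :=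
  div_nonneg (Real.rpow_nonneg (abs_nonneg _) _)
    (sum_nonneg fun _ _ => Real.rpow_nonneg (abs_nonneg _) _)

lemma kacWeight_eq (hx : A *ᵥ x = b) (y : Fin n → ℝ) (i : Fin m) :
    kacWeight A b p y i = |(A *ᵥ (y - x)) i| ^ p / ∑ i', |(A *ᵥ (y - x)) i'| ^ p := by
  simp only [kacWeight, mulVec_sub, hx, Pi.sub_apply]

lemma sum_sq_kacStep_sub {i : Fin m} (hi : ∑ j, A i j ^ 2 = 1) (hx : A *ᵥ x = b)
    (y : Fin n → ℝ) :
    ∑ j, (kacStep A b y i j - x j) ^ 2 = ∑ j, (y j - x j) ^ 2 - (A *ᵥ (y - x)) i ^ 2 := by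
  set d := (A *ᵥ (y - x)) i
  have hres : b i - (A *ᵥ y) i = -d := by
    simp only [d, mulVec_sub, hx, Pi.sub_apply, neg_sub]
  have hd : d = ∑ j, A i j * (y j - x j) := rfl
  calc ∑ j, (kacStep A b y i j - x j) ^ 2
      = ∑ j, ((y j - x j) ^ 2 - 2 * d * (A i j * (y j - x j)) + d ^ 2 * A i j ^ 2) :=
        sum_congr rfl fun j _ => by
          simp only [kacStep, Pi.add_apply, Pi.smul_apply, smul_eq_mul, hres]
          ring
    _ = ∑ j, (y j - x j) ^ 2 - 2 * d * ∑ j, A i j * (y j - x j) + d ^ 2 * ∑ j, A i j ^ 2 := by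
        rw [sum_add_distrib, sum_sub_distrib, ← mul_sum, ← mul_sum]
    _ = ∑ j, (y j - x j) ^ 2 - d ^ 2 := by
        rw [← hd, hi]
        ring

lemma sum_kacWeight_mul_sum_sq_kacStep_sub_le (hp : p ≠ 0) (hp2 : p + 2 ≠ 0)
    (hrows : ∀ i, ∑ j, A i j ^ 2 = 1) (hx : A *ᵥ x = b) (y : Fin n → ℝ) :
    ∑ i, kacWeight A b p y i * ∑ j, (kacStep A b y i j - x j) ^ 2 ≤
      (1 - kacRate A p) * ∑ j, (y j - x j) ^ 2 := by
  have hrate := kacRate_mul_sum_sq_le (A := A) hp hp2 (y - x)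
  simp only [Pi.sub_apply] at hrate
  simp only [kacWeight_eq hx, sum_sq_kacStep_sub (hrows _) hx]
  set d := A *ᵥ (y - x)
  set E := ∑ j, (y j - x j) ^ 2
  have hsplit : ∑ i, |d i| ^ p / (∑ i', |d i'| ^ p) * (E - d i ^ 2) =
      (∑ i, |d i| ^ p) / (∑ i, |d i| ^ p) * E - (∑ i, |d i| ^ (p + 2)) / ∑ i, |d i| ^ p := by
    rw [sum_div, sum_div, sum_mul, ← sum_sub_distrib]
    exact sum_congr rfl fun i _ => by rw [abs_rpow_add_two hp2]; ring
  rw [hsplit]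
  rcases (sum_nonneg fun i _ => Real.rpow_nonneg (abs_nonneg (d i)) p).eq_or_lt with hS | hS
  · -- `A (y - x) = 0`, and every weight is a division by zero
    rw [← hS, div_zero, div_zero, zero_mul, sub_zero]
    exact mul_nonneg (sub_nonneg.2 (kacRate_le_one hp hp2 fun i => (hrows i).le))
      (sum_nonneg fun _ _ => sq_nonneg _)
  · rw [div_self hS.ne', one_mul]
    linarith

end Iteration

theorem weighted_kaczmarz_convergence_general {m n : ℕ} (A : Matrix (Fin m) (Fin n) ℝ)
    (hrows : ∀ i, ∑ j, (A i j) ^ 2 = 1)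
    (b : Fin m → ℝ) (x : Fin n → ℝ) (hx : A.mulVec x = b)
    (p : ℝ) (hp : 0 < p) (x0 : Fin n → ℝ) (k : ℕ) :
    kacErr A b p x k x0 ≤
      (1 - ⨅ z : {z : Fin n → ℝ // z ≠ 0},
          lpNorm (p + 2) (A.mulVec z.1) ^ (p + 2) /
            (lpNorm p (A.mulVec z.1) ^ p * ∑ j, (z.1 j) ^ 2)) ^ k *
        ∑ j, (x0 j - x j) ^ 2 := by
  change kacErr A b p x k x0 ≤ (1 - kacRate A p) ^ k * ∑ j, (x0 j - x j) ^ 2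
  have hp2 : p + 2 ≠ 0 := by positivity
  have hrate : 0 ≤ 1 - kacRate A p :=
    sub_nonneg.2 (kacRate_le_one hp.ne' hp2 fun i => (hrows i).le)
  induction k generalizing x0 with
  | zero => simp [kacErr]
  | succ k ih =>
    calc kacErr A b p x (k + 1) x0
        = ∑ i, kacWeight A b p x0 i * kacErr A b p x k (kacStep A b x0 i) := rfl
      _ ≤ ∑ i, kacWeight A b p x0 i *
            ((1 - kacRate A p) ^ k * ∑ j, (kacStep A b x0 i j - x j) ^ 2) :=
        sum_le_sum fun i _ => mul_le_mul_of_nonneg_left (ih _) (kacWeight_nonneg x0 i)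
      _ = (1 - kacRate A p) ^ k *
            ∑ i, kacWeight A b p x0 i * ∑ j, (kacStep A b x0 i j - x j) ^ 2 := by
        rw [mul_sum]
        exact sum_congr rfl fun i _ => by ring
      _ ≤ (1 - kacRate A p) ^ k * ((1 - kacRate A p) * ∑ j, (x0 j - x j) ^ 2) :=
        mul_le_mul_of_nonneg_left
          (sum_kacWeight_mul_sum_sq_kacStep_sub_le hp.ne' hp2 hrows hx x0) (pow_nonneg hrate k)
      _ = (1 - kacRate A p) ^ (k + 1) * ∑ j, (x0 j - x j) ^ 2 := by ring

/-- Main theorem: `E‖x_k - x‖₂² ≤ (1 - c_p)^k ‖x_0 - x‖₂²`, where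
`c_p = inf_{z ≠ 0} ‖Az‖_{ℓ^{p+2}}^{p+2}/(‖Az‖_{ℓ^p}^p ‖z‖₂²)`. -/
theorem weighted_kaczmarz_convergence {m n : ℕ} (A : Matrix (Fin m) (Fin n) ℝ)
    (hmn : n ≤ m) (hrank : A.rank = n)
    (hrows : ∀ i, ∑ j, (A i j) ^ 2 = 1)
    (b : Fin m → ℝ) (x : Fin n → ℝ) (hx : A.mulVec x = b)
    (p : ℝ) (hp : 0 < p) (x0 : Fin n → ℝ) (k : ℕ) :
    kacErr A b p x k x0 ≤
      (1 - ⨅ z : {z : Fin n → ℝ // z ≠ 0},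
          lpNorm (p + 2) (A.mulVec z.1) ^ (p + 2) /
            (lpNorm p (A.mulVec z.1) ^ p * ∑ j, (z.1 j) ^ 2)) ^ k *
        ∑ j, (x0 j - x j) ^ 2 :=
  weighted_kaczmarz_convergence_general A hrows b x hx p hp x0 k
end

section
/- Let c_1, …, c_n ≥ 0 and define F(p) = (∑_{i=1}^n e^{c_i(p+2)}) / (∑_{i=1}^n e^{c_i p}) for p > 0. Then F is nondecreasing in p. -/
/-!
Cross-multiplying, `F p ≤ F q` becomes the weighted Chebyshev sum inequality with weights
`e^{cᵢ p}` for the sequences `e^{2 cᵢ}` and `e^{(q - p) cᵢ}`, which are similarly ordered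
because both increase with `cᵢ`.
-/

open Finset Real

theorem MonovaryOn.sum_mul_sum_le_sum_mul_sum {ι α : Type*} [CommRing α] [LinearOrder α]
    [IsStrictOrderedRing α] {s : Finset ι} {w f g : ι → α} (hw : ∀ i ∈ s, 0 ≤ w i)
    (hfg : MonovaryOn f g s) :
    (∑ i ∈ s, w i * f i) * ∑ i ∈ s, w i * g i ≤ (∑ i ∈ s, w i) * ∑ i ∈ s, w i * (f i * g i) := by
  have hpair : 0 ≤ ∑ i ∈ s, ∑ j ∈ s, w i * w j * ((f j - f i) * (g j - g i)) :=
    sum_nonneg fun i hi ↦ sum_nonneg fun j hj ↦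
      mul_nonneg (mul_nonneg (hw i hi) (hw j hj)) (hfg.sub_mul_sub_nonneg hi hj)
  have hexpand : ∑ i ∈ s, ∑ j ∈ s, w i * w j * ((f j - f i) * (g j - g i)) =
      (∑ i ∈ s, w i) * ∑ i ∈ s, w i * (f i * g i) - (∑ i ∈ s, w i * f i) * ∑ i ∈ s, w i * g i +
        ((∑ i ∈ s, w i * (f i * g i)) * ∑ i ∈ s, w i
          - (∑ i ∈ s, w i * g i) * ∑ i ∈ s, w i * f i) := by
    simp only [sum_mul_sum, ← sum_add_distrib, ← sum_sub_distrib]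
    refine sum_congr rfl fun i _ ↦ sum_congr rfl fun j _ ↦ ?_
    ring
  linarith

theorem monotone_sum_exp_mul_add_div_sum_exp_mul {ι : Type*} (s : Finset ι) (c : ι → ℝ)
    {a : ℝ} (ha : 0 ≤ a) :
    Monotone fun p ↦ (∑ i ∈ s, exp (c i * (p + a))) / ∑ i ∈ s, exp (c i * p) := by
  intro p q hpq
  rcases s.eq_empty_or_nonempty with rfl | hs
  · simp
  have hmonovary : MonovaryOn (fun i ↦ exp (a * c i)) (fun i ↦ exp ((q - p) * c i)) s := by
    have hF : Monotone fun x ↦ exp (a * x) := exp_monotone.comp (monotone_mul_left_of_nonneg ha)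
    have hG : Monotone fun x ↦ exp ((q - p) * x) :=
      exp_monotone.comp (monotone_mul_left_of_nonneg (sub_nonneg.2 hpq))
    exact (((monovary_self c).comp_monotone_left hG).symm.comp_monotone_left hF).monovaryOn _
  have hchebyshev := hmonovary.sum_mul_sum_le_sum_mul_sum (w := fun i ↦ exp (c i * p))
    fun i _ ↦ (exp_pos _).le
  simp only [← exp_add] at hchebyshev
  rw [div_le_div_iff₀ (sum_pos (fun i _ ↦ exp_pos _) hs) (sum_pos (fun i _ ↦ exp_pos _) hs),
    mul_comm _ (∑ i ∈ s, exp (c i * p))]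
  convert hchebyshev using 4 <;> ring

theorem exp_ratio_monotone_general {n : ℕ} (c : Fin n → ℝ)
    (p q : ℝ) (hpq : p ≤ q) :
    (∑ i, Real.exp (c i * (p + 2))) / (∑ i, Real.exp (c i * p)) ≤
      (∑ i, Real.exp (c i * (q + 2))) / (∑ i, Real.exp (c i * q)) :=
  monotone_sum_exp_mul_add_div_sum_exp_mul univ c zero_le_two hpq

/-- For `c₁,…,c_n ≥ 0`, the map `p ↦ (∑ i, e^{cᵢ(p+2)})/(∑ i, e^{cᵢ p})` is nondecreasing
on `(0,∞)`. -/
theorem exp_ratio_monotone {n : ℕ} (c : Fin n → ℝ) (hc : ∀ i, 0 ≤ c i)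
    (p q : ℝ) (hp : 0 < p) (hpq : p ≤ q) :
    (∑ i, Real.exp (c i * (p + 2))) / (∑ i, Real.exp (c i * p)) ≤
      (∑ i, Real.exp (c i * (q + 2))) / (∑ i, Real.exp (c i * q)) :=
  exp_ratio_monotone_general c p q hpq
end

section
/- Let A have unit-norm rows and let x solve Ax = b. If at each step of the Kaczmarz iteration an index i with |⟨a_i, x_k⟩ − b_i| = ‖Ax_k − b‖_{ℓ^∞} is chosen (maximal correction), then ‖x_{k+1} − x‖_2^2 = ‖x_k − x‖_2^2 − ‖A(x_k − x)‖_{ℓ^∞}^2 ≤ (1 − 1/(m‖A^{-1}‖_2^2)) ‖x_k − x‖_2^2. -/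
/-! The step projects `x_k` orthogonally onto the hyperplane `⟨a_i, y⟩ = b_i`, which
contains `x`, so Pythagoras gives `‖x_{k+1} - x‖² = ‖x_k - x‖² - ⟨a_i, x_k - x⟩²`, and by
the choice of `i` the residual `⟨a_i, x_k - x⟩` is the largest entry of `A (x_k - x)` in
absolute value. The contraction then follows from `‖e‖² ≤ C² ‖A e‖² ≤ m C² ‖A e‖_∞²`. -/

/-- Euclidean norm. -/
noncomputable def e2 {n : ℕ} (z : Fin n → ℝ) : ℝ := Real.sqrt (∑ j, (z j) ^ 2)

open Matrix

def kaczmarzStep {R ι : Type*} [CommRing R] [Fintype ι] (a : ι → R) (β : R) (v : ι → R) :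
    ι → R :=
  v + (β - a ⬝ᵥ v) • a

theorem kaczmarzStep_sub_dotProduct_self {R ι : Type*} [CommRing R] [Fintype ι]
    {a x : ι → R} {β : R} (ha : a ⬝ᵥ a = 1) (hx : a ⬝ᵥ x = β) (v : ι → R) :
    (kaczmarzStep a β v - x) ⬝ᵥ (kaczmarzStep a β v - x) =
      (v - x) ⬝ᵥ (v - x) - (a ⬝ᵥ (v - x)) ^ 2 := by
  have hstep : kaczmarzStep a β v - x = (v - x) - (a ⬝ᵥ (v - x)) • a := by
    rw [kaczmarzStep, dotProduct_sub, hx]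
    module
  rw [hstep]
  simp only [sub_dotProduct, dotProduct_sub, smul_dotProduct, dotProduct_smul, ha,
    dotProduct_comm (v - x) a, smul_eq_mul]
  ring

theorem sum_sq_le_card_mul_iSup_abs_sq {ι : Type*} [Fintype ι] (r : ι → ℝ) :
    ∑ i, r i ^ 2 ≤ Fintype.card ι * (⨆ i, |r i|) ^ 2 := by
  have hle : ∀ i ∈ Finset.univ, r i ^ 2 ≤ (⨆ i, |r i|) ^ 2 := fun i _ =>
    sq_le_sq.2 <|
      (le_ciSup (f := fun i => |r i|) (Set.finite_range _).bddAbove i).trans (le_abs_self _)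
  simpa using Finset.sum_le_card_nsmul _ _ _ hle

theorem sq_e2 {n : ℕ} (z : Fin n → ℝ) : e2 z ^ 2 = z ⬝ᵥ z := by
  rw [e2, Real.sq_sqrt (by positivity)]
  simp only [dotProduct, sq]

theorem sum_sub_sq_eq_dotProduct {R ι : Type*} [CommRing R] [Fintype ι] (u v : ι → R) :
    ∑ j, (u j - v j) ^ 2 = (u - v) ⬝ᵥ (u - v) := by
  simp only [dotProduct, Pi.sub_apply, sq]

theorem maximal_correction_step_general {m n : ℕ} (A : Matrix (Fin m) (Fin n) ℝ)
    (hrows : ∀ i, ∑ j, (A i j) ^ 2 = 1)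
    (C : ℝ) (hC : ∀ z : Fin n → ℝ, e2 z ≤ C * e2 (A.mulVec z))
    (b : Fin m → ℝ) (x : Fin n → ℝ) (hx : A.mulVec x = b)
    (xk : Fin n → ℝ) (i : Fin m)
    (hi : |A.mulVec xk i - b i| = ⨆ i', |A.mulVec xk i' - b i'|) :
    (∑ j, ((xk + (b i - A.mulVec xk i) • A i) j - x j) ^ 2) =
        (∑ j, (xk j - x j) ^ 2) - (⨆ i', |A.mulVec (xk - x) i'|) ^ 2 ∧
      (∑ j, ((xk + (b i - A.mulVec xk i) • A i) j - x j) ^ 2) ≤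
        (1 - 1 / (m * C ^ 2)) * ∑ j, (xk j - x j) ^ 2 := by
  set r := A *ᵥ (xk - x)
  have hres : ∀ i', (A *ᵥ xk) i' - b i' = r i' := by simp [r, mulVec_sub, hx]
  have hmax : (⨆ i', |r i'|) = |r i| := by simp only [← hres, hi]
  have hpyth : ∑ j, ((xk + (b i - (A *ᵥ xk) i) • A i) j - x j) ^ 2 =
      (xk - x) ⬝ᵥ (xk - x) - r i ^ 2 :=
    (sum_sub_sq_eq_dotProduct _ _).trans <| kaczmarzStep_sub_dotProduct_self
      (by simpa only [dotProduct, sq] using hrows i) (congrFun hx i) xk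
  have hlower : (xk - x) ⬝ᵥ (xk - x) ≤ r i ^ 2 * (m * C ^ 2) := calc
    (xk - x) ⬝ᵥ (xk - x) = e2 (xk - x) ^ 2 := (sq_e2 _).symm
    _ ≤ (C * e2 r) ^ 2 := pow_le_pow_left₀ (Real.sqrt_nonneg _) (hC _) 2
    _ = C ^ 2 * ∑ i', r i' ^ 2 := by rw [mul_pow, sq_e2]; simp only [dotProduct, sq]
    _ ≤ C ^ 2 * (m * r i ^ 2) := by
      gcongr
      simpa [hmax] using sum_sq_le_card_mul_iSup_abs_sq r
    _ = r i ^ 2 * (m * C ^ 2) := by ring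
  rw [hpyth, sum_sub_sq_eq_dotProduct, hmax, sq_abs]
  refine ⟨rfl, ?_⟩
  have := div_le_of_le_mul₀ (by positivity) (sq_nonneg _) hlower
  rw [one_sub_mul, one_div_mul_eq_div]
  linarith

/-- The maximal correction (greedy) Kaczmarz step: if `i` maximizes `|⟨aᵢ,x_k⟩ - bᵢ|`, then
`‖x_{k+1}-x‖₂² = ‖x_k-x‖₂² - ‖A(x_k-x)‖_∞² ≤ (1 - 1/(m‖A⁻¹‖₂²)) ‖x_k-x‖₂²`. -/
theorem maximal_correction_step {m n : ℕ} (hm : 0 < m) (A : Matrix (Fin m) (Fin n) ℝ)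
    (hrank : A.rank = n)
    (hrows : ∀ i, ∑ j, (A i j) ^ 2 = 1)
    (C : ℝ) (hC : ∀ z : Fin n → ℝ, e2 z ≤ C * e2 (A.mulVec z))
    (b : Fin m → ℝ) (x : Fin n → ℝ) (hx : A.mulVec x = b)
    (xk : Fin n → ℝ) (i : Fin m)
    (hi : |A.mulVec xk i - b i| = ⨆ i', |A.mulVec xk i' - b i'|) :
    (∑ j, ((xk + (b i - A.mulVec xk i) • A i) j - x j) ^ 2) =
        (∑ j, (xk j - x j) ^ 2) - (⨆ i', |A.mulVec (xk - x) i'|) ^ 2 ∧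
      (∑ j, ((xk + (b i - A.mulVec xk i) • A i) j - x j) ^ 2) ≤
        (1 - 1 / (m * C ^ 2)) * ∑ j, (xk j - x j) ^ 2 :=
  maximal_correction_step_general A hrows C hC b x hx xk i hi
end
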